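/- Let X, X_1, X_2, ... be i.i.d. real-valued random variables with mean μ and variance σ², 0 < σ² < +∞. If n, m_n → +∞ in such a way that n = o(m_n), then S²_{m_n,n} − S_n² → 0 in probability-P_{X,w}; that is, for every ε > 0, P_{X,w}( |S²_{m_n,n} − S_n²| > ε ) → 0 as n → ∞. -/

import Mathlib

open MeasureTheory ProbabilityTheory Filter

/-- The standard normal distribution function Φ. -/
noncomputable def Phi (t : ℝ) : ℝ := ((gaussianReal 0 1) (Set.Iic t)).toReal

/-- `(w 1, …, w n)` has the multinomial distribution of size `m` with equal
probabilities `1/n` under `Pw`. -/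
def IsUnifMultinomial {Ωw : Type} [MeasurableSpace Ωw] (Pw : Measure Ωw)
    (n m : ℕ) (w : Fin n → Ωw → ℕ) : Prop :=
  (∀ i, Measurable (w i)) ∧
  ∀ k : Fin n → ℕ,
    (Pw {ω | ∀ i, w i ω = k i}).toReal =
      if ∑ i, k i = m then
        (Nat.factorial m : ℝ) / (∏ i, (Nat.factorial (k i) : ℝ)) * (1 / n) ^ m
      else 0

/-- Sample mean X̄_n. -/
noncomputable def sampleMean {Ωx : Type} (X : ℕ → Ωx → ℝ) (n : ℕ) (ωx : Ωx) : ℝ :=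
  (∑ i : Fin n, X i ωx) / n

/-- Sample variance S_n². -/
noncomputable def sampleVar {Ωx : Type} (X : ℕ → Ωx → ℝ) (n : ℕ) (ωx : Ωx) : ℝ :=
  (∑ i : Fin n, (X i ωx - sampleMean X n ωx) ^ 2) / n

/-- Randomized sample mean X̄_{m,n}, for a realization `k` of the multinomial weights. -/
noncomputable def randMean {Ωx : Type} (X : ℕ → Ωx → ℝ) (n m : ℕ)
    (k : Fin n → ℕ) (ωx : Ωx) : ℝ :=
  (∑ i : Fin n, (k i : ℝ) * X i ωx) / m

/-- Randomized sample variance S²_{m,n}. -/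
noncomputable def randVar {Ωx : Type} (X : ℕ → Ωx → ℝ) (n m : ℕ)
    (k : Fin n → ℕ) (ωx : Ωx) : ℝ :=
  (∑ i : Fin n, (k i : ℝ) * (X i ωx - randMean X n m k ωx) ^ 2) / m

/-- √(Σ_j (k_j/m − 1/n)²). -/
noncomputable def weightNorm (n m : ℕ) (k : Fin n → ℕ) : ℝ :=
  Real.sqrt (∑ j : Fin n, ((k j : ℝ) / m - 1 / n) ^ 2)

/-- The randomized pivot G^{(1)}_{m,n} (given the weight realization `k`). -/
noncomputable def G1 {Ωx : Type} (X : ℕ → Ωx → ℝ) (μ : ℝ) (n m : ℕ)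
    (k : Fin n → ℕ) (ωx : Ωx) : ℝ :=
  (∑ i : Fin n, |(k i : ℝ) / m - 1 / n| * (X i ωx - μ)) /
    (Real.sqrt (sampleVar X n ωx) * weightNorm n m k)

/-- The randomized pivot T^{(1)}_{m,n}. -/
noncomputable def T1 {Ωx : Type} (X : ℕ → Ωx → ℝ) (n m : ℕ)
    (k : Fin n → ℕ) (ωx : Ωx) : ℝ :=
  (∑ i : Fin n, ((k i : ℝ) / m - 1 / n) * X i ωx) /
    (Real.sqrt (sampleVar X n ωx) * weightNorm n m k)

/-- The randomized pivot G^{(2)}_{m,n}. -/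
noncomputable def G2 {Ωx : Type} (X : ℕ → Ωx → ℝ) (μ : ℝ) (n m : ℕ)
    (k : Fin n → ℕ) (ωx : Ωx) : ℝ :=
  (∑ i : Fin n, |(k i : ℝ) / m - 1 / n| * (X i ωx - μ)) /
    (Real.sqrt (randVar X n m k ωx) * weightNorm n m k)

/-- The randomized pivot T^{(2)}_{m,n}. -/
noncomputable def T2 {Ωx : Type} (X : ℕ → Ωx → ℝ) (n m : ℕ)
    (k : Fin n → ℕ) (ωx : Ωx) : ℝ :=
  (∑ i : Fin n, ((k i : ℝ) / m - 1 / n) * X i ωx) /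
    (Real.sqrt (randVar X n m k ωx) * weightNorm n m k)

/-! Given the sample, the weights enter `S²_{m,n} - S_n²` only through three linear statistics
`∑ cᵢ (wᵢ/m - 1/n)` of the centred multinomial weights, with `cᵢ = Xᵢ²`, `Xᵢ` and `2 X̄_n Xᵢ`,
and the multinomial covariance formula bounds the second moment of each by `∑ cᵢ² / (m n)`.
Chebyshev's inequality therefore bounds the conditional probability of a deviation by an
expression in `n / m`, `1 / m` and the empirical first and second moments, which tends to `0` as
soon as these moments converge, that is, for `P_X`-almost every sample by the strong law of large
numbers. Dominated convergence over the sample gives the convergence under `P_X × P_w`. -/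

open Finset Topology

section MultinomialMoments

variable {n m : ℕ}

noncomputable def multinomialWeight (n m : ℕ) (k : Fin n → ℕ) : ℝ :=
  (Nat.factorial m : ℝ) / (∏ i, (Nat.factorial (k i) : ℝ)) * (1 / n) ^ m

lemma multinomialWeight_nonneg (k : Fin n → ℕ) : 0 ≤ multinomialWeight n m k := by
  unfold multinomialWeight; positivity

lemma succ_mul_multinomialWeight_add_single (k : Fin n → ℕ) (j : Fin n) :
    ((k j : ℝ) + 1) * multinomialWeight n (m + 1) (k + Pi.single j 1) =
      (m + 1) / n * multinomialWeight n m k := by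
  have hprod : ∏ i, (Nat.factorial ((k + Pi.single j 1 : Fin n → ℕ) i) : ℝ) =
      ((k j : ℝ) + 1) * ∏ i, (Nat.factorial (k i) : ℝ) := by
    rw [← mul_prod_erase _ _ (mem_univ j), ← mul_prod_erase _ _ (mem_univ j), ← mul_assoc]
    congr 1
    · simp [Nat.factorial_succ]
    · refine prod_congr rfl fun i hi => ?_
      simp [ne_of_mem_erase hi]
  unfold multinomialWeight
  rw [hprod, Nat.factorial_succ, pow_succ]
  push_cast
  field_simp

lemma sum_piAntidiag_succ_mul (j : Fin n) (g : (Fin n → ℕ) → ℝ) :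
    ∑ k ∈ piAntidiag univ (m + 1), (k j : ℝ) * g k =
      ∑ k ∈ piAntidiag univ m, ((k j : ℝ) + 1) * g (k + Pi.single j 1) := by
  symm
  refine sum_bij_ne_zero (fun k _ _ => k + Pi.single j 1) ?_ ?_ ?_ ?_
  · intro k hk _
    simp_all [sum_add_distrib]
  · intro k _ _ k' _ _ h
    simpa using h
  · intro k hk hne
    have hkj : k j ≠ 0 := by rintro h; simp [h] at hne
    have hk' : k - Pi.single j 1 + Pi.single j 1 = k := by
      ext i
      rcases eq_or_ne i j with rfl | hij
      · simp only [Pi.add_apply, Pi.sub_apply, Pi.single_eq_same]; omega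
      · simp [hij]
    refine ⟨k - Pi.single j 1, ?_, ?_, hk'⟩
    · have hsum := (mem_piAntidiag.1 hk).1
      rw [← hk'] at hsum
      simpa [sum_add_distrib] using hsum
    · rw [hk']
      exact mul_ne_zero (by positivity) (right_ne_zero_of_mul hne)
  · intro k _ _
    simp

lemma sum_mul_multinomialWeight_succ (j : Fin n) (h : (Fin n → ℕ) → ℝ) :
    ∑ k ∈ piAntidiag univ (m + 1), (k j : ℝ) * multinomialWeight n (m + 1) k * h k =
      (m + 1) / n * ∑ k ∈ piAntidiag univ m, multinomialWeight n m k * h (k + Pi.single j 1) := by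
  simp_rw [mul_assoc, sum_piAntidiag_succ_mul j, mul_sum, ← mul_assoc,
    succ_mul_multinomialWeight_add_single]

lemma sum_multinomialWeight (hn : n ≠ 0) :
    ∑ k ∈ piAntidiag univ m, multinomialWeight n m k = 1 := by
  induction m with
  | zero => simp [multinomialWeight]
  | succ m ih =>
    have hsum : ((m : ℝ) + 1) * ∑ k ∈ piAntidiag univ (m + 1), multinomialWeight n (m + 1) k =
        ∑ j, ∑ k ∈ piAntidiag univ (m + 1), (k j : ℝ) * multinomialWeight n (m + 1) k * 1 := by
      rw [sum_comm, mul_sum]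
      refine sum_congr rfl fun k hk => ?_
      rw [← sum_mul, ← sum_mul, ← Nat.cast_sum, (mem_piAntidiag.1 hk).1]
      push_cast; ring
    simp only [sum_mul_multinomialWeight_succ] at hsum
    simp only [mul_one, ih, sum_const, card_univ, Fintype.card_fin, nsmul_eq_mul] at hsum
    rw [mul_div_cancel₀ _ (Nat.cast_ne_zero.2 hn)] at hsum
    exact mul_left_cancel₀ (by positivity) (hsum.trans (mul_one _).symm)

lemma sum_multinomialWeight_mul_linear (hn : n ≠ 0) (c : Fin n → ℝ) :
    ∑ k ∈ piAntidiag univ m, multinomialWeight n m k * ∑ i, c i * k i = m / n * ∑ i, c i := by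
  cases m with
  | zero => simp
  | succ m =>
    simp_rw [mul_sum, sum_comm (s := piAntidiag univ (m + 1))]
    refine sum_congr rfl fun i _ => ?_
    calc ∑ k ∈ piAntidiag univ (m + 1), multinomialWeight n (m + 1) k * (c i * k i)
        = c i * ∑ k ∈ piAntidiag univ (m + 1), (k i : ℝ) * multinomialWeight n (m + 1) k * 1 := by
          rw [mul_sum]; exact sum_congr rfl fun k _ => by ring
      _ = (m + 1 : ℕ) / n * c i := by
          rw [sum_mul_multinomialWeight_succ]
          simp only [mul_one, sum_multinomialWeight hn]
          push_cast
          ring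

lemma sum_multinomialWeight_mul_linear_sq (hn : n ≠ 0) (c : Fin n → ℝ) :
    ∑ k ∈ piAntidiag univ m, multinomialWeight n m k * (∑ i, c i * k i) ^ 2 =
      m / n * ((m - 1) / n * (∑ i, c i) ^ 2 + ∑ i, c i ^ 2) := by
  cases m with
  | zero => simp
  | succ m =>
    have hshift : ∀ j (k : Fin n → ℕ),
        ∑ i, c i * ((k + Pi.single j 1 : Fin n → ℕ) i : ℝ) = ∑ i, c i * k i + c j := by
      intro j k
      simp [mul_add, sum_add_distrib, Pi.single_apply]
    calc ∑ k ∈ piAntidiag univ (m + 1), multinomialWeight n (m + 1) k * (∑ i, c i * k i) ^ 2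
        = ∑ k ∈ piAntidiag univ (m + 1), ∑ j,
            c j * ((k j : ℝ) * multinomialWeight n (m + 1) k * ∑ i, c i * k i) := by
          refine sum_congr rfl fun k _ => ?_
          rw [sq, mul_comm, sum_mul, sum_mul]
          exact sum_congr rfl fun j _ => by ring
      _ = ∑ j, c j * ((m + 1) / n * (m / n * ∑ i, c i + c j)) := by
          rw [sum_comm]
          refine sum_congr rfl fun j _ => ?_
          rw [← mul_sum, sum_mul_multinomialWeight_succ]
          simp_rw [hshift, mul_add, sum_add_distrib, ← sum_mul, sum_multinomialWeight_mul_linear hn,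
            sum_multinomialWeight hn]
          ring
      _ = ((m + 1 : ℕ) : ℝ) / n *
            ((((m + 1 : ℕ) : ℝ) - 1) / n * (∑ i, c i) ^ 2 + ∑ i, c i ^ 2) := by
          simp only [mul_add, sum_add_distrib, mul_left_comm (c _), ← mul_sum, ← sum_mul, sq]
          push_cast
          ring

lemma sum_multinomialWeight_mul_linear_centered_sq (hn : n ≠ 0) (hm : m ≠ 0) (c : Fin n → ℝ) :
    ∑ k ∈ piAntidiag univ m, multinomialWeight n m k * (∑ i, c i * ((k i : ℝ) / m - 1 / n)) ^ 2 =
      (∑ i, c i ^ 2) / (m * n) - (∑ i, c i) ^ 2 / (m * n ^ 2) := by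
  have hexpand : ∀ k : Fin n → ℕ,
      multinomialWeight n m k * (∑ i, c i * ((k i : ℝ) / m - 1 / n)) ^ 2 =
        multinomialWeight n m k * (∑ i, c i * k i) ^ 2 / m ^ 2
          - 2 * (∑ i, c i) / (m * n) * (multinomialWeight n m k * ∑ i, c i * k i)
          + (∑ i, c i) ^ 2 / n ^ 2 * multinomialWeight n m k := by
    intro k
    simp only [mul_sub, sum_sub_distrib, ← sum_mul, mul_div_assoc', ← sum_div]
    ring
  simp only [hexpand, sum_add_distrib, sum_sub_distrib, ← sum_div, ← mul_sum,
    sum_multinomialWeight_mul_linear_sq hn, sum_multinomialWeight_mul_linear hn,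
    sum_multinomialWeight hn]
  field_simp
  ring

end MultinomialMoments

namespace IsUnifMultinomial

variable {Ωw : Type} [MeasurableSpace Ωw] {Pw : Measure Ωw} [IsFiniteMeasure Pw] {n m : ℕ}
  {w : Fin n → Ωw → ℕ}

lemma measure_eq_ofReal (hw : IsUnifMultinomial Pw n m w) (k : Fin n → ℕ) :
    Pw {ω | ∀ i, w i ω = k i} =
      ENNReal.ofReal (if ∑ i, k i = m then multinomialWeight n m k else 0) := by
  rw [multinomialWeight, ← hw.2 k, ENNReal.ofReal_toReal (measure_ne_top _ _)]

lemma ae_sum_eq (hw : IsUnifMultinomial Pw n m w) : ∀ᵐ ω ∂Pw, ∑ i, w i ω = m := by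
  rw [ae_iff]
  refine measure_mono_null (t := ⋃ k : {k : Fin n → ℕ // ∑ i, k i ≠ m}, {ω | ∀ i, w i ω = k.1 i})
    (fun ω hω => Set.mem_iUnion.2 ⟨⟨fun i => w i ω, hω⟩, fun i => rfl⟩) ?_
  exact measure_iUnion_null fun k => by simp [hw.measure_eq_ofReal, k.2]

lemma measure_le_sum (hw : IsUnifMultinomial Pw n m w) (p : (Fin n → ℕ) → Prop)
    [DecidablePred p] :
    Pw {ω | p (fun i => w i ω)} ≤
      ∑ k ∈ (piAntidiag univ m).filter p, ENNReal.ofReal (multinomialWeight n m k) :=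
  calc Pw {ω | p (fun i => w i ω)}
      ≤ Pw (⋃ k ∈ (piAntidiag univ m).filter p, {ω | ∀ i, w i ω = k i}) := by
        refine measure_mono_ae ?_
        filter_upwards [hw.ae_sum_eq] with ω hω hp
        exact Set.mem_iUnion₂.2 ⟨fun i => w i ω, mem_filter.2 ⟨by simpa using hω, hp⟩, fun i => rfl⟩
    _ ≤ ∑ k ∈ (piAntidiag univ m).filter p, Pw {ω | ∀ i, w i ω = k i} :=
        measure_biUnion_finset_le _ _
    _ = ∑ k ∈ (piAntidiag univ m).filter p, ENNReal.ofReal (multinomialWeight n m k) :=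
        sum_congr rfl fun k hk => by
          rw [hw.measure_eq_ofReal, if_pos (mem_piAntidiag.1 (mem_filter.1 hk).1).1]

lemma measure_lt_abs_le (hw : IsUnifMultinomial Pw n m w) {δ : ℝ} (hδ : 0 < δ)
    (g : (Fin n → ℕ) → ℝ) :
    Pw {ω | δ < |g (fun i => w i ω)|} ≤
      ENNReal.ofReal ((∑ k ∈ piAntidiag univ m, multinomialWeight n m k * g k ^ 2) / δ ^ 2) := by
  classical
  refine (hw.measure_le_sum fun k => δ < |g k|).trans ?_
  rw [← ENNReal.ofReal_sum_of_nonneg fun k _ => multinomialWeight_nonneg k, sum_div]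
  refine ENNReal.ofReal_le_ofReal ?_
  calc ∑ k ∈ (piAntidiag univ m).filter (fun k => δ < |g k|), multinomialWeight n m k
      ≤ ∑ k ∈ (piAntidiag univ m).filter (fun k => δ < |g k|),
          multinomialWeight n m k * g k ^ 2 / δ ^ 2 := by
        refine sum_le_sum fun k hk => ?_
        have hg : δ ^ 2 ≤ g k ^ 2 := by
          simpa [sq_abs] using pow_le_pow_left₀ hδ.le (mem_filter.1 hk).2.le 2
        rw [le_div_iff₀ (by positivity)]
        exact mul_le_mul_of_nonneg_left hg (multinomialWeight_nonneg k)
    _ ≤ ∑ k ∈ piAntidiag univ m, multinomialWeight n m k * g k ^ 2 / δ ^ 2 :=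
        sum_le_sum_of_subset_of_nonneg (filter_subset _ _) fun k _ _ =>
          div_nonneg (mul_nonneg (multinomialWeight_nonneg k) (sq_nonneg _)) (sq_nonneg _)

lemma measure_lt_abs_linear_le (hw : IsUnifMultinomial Pw n m w) (hn : n ≠ 0) (hm : m ≠ 0)
    {δ : ℝ} (hδ : 0 < δ) (c : Fin n → ℝ) :
    Pw {ω | δ < |∑ i, c i * ((w i ω : ℝ) / m - 1 / n)|} ≤
      ENNReal.ofReal ((∑ i, c i ^ 2) / (m * n * δ ^ 2)) := by
  refine (hw.measure_lt_abs_le hδ fun k => ∑ i, c i * ((k i : ℝ) / m - 1 / n)).trans ?_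
  refine ENNReal.ofReal_le_ofReal ?_
  rw [sum_multinomialWeight_mul_linear_centered_sq hn hm, ← div_div _ (_ * _)]
  gcongr
  exact sub_le_self _ (by positivity)

end IsUnifMultinomial

lemma sum_mul_sub_sum_mul_sq {ι : Type*} (s : Finset ι) (p x : ι → ℝ) (hp : ∑ i ∈ s, p i = 1) :
    ∑ i ∈ s, p i * (x i - ∑ j ∈ s, p j * x j) ^ 2 =
      ∑ i ∈ s, p i * x i ^ 2 - (∑ i ∈ s, p i * x i) ^ 2 := by
  have hexpand : ∀ i, p i * (x i - ∑ j ∈ s, p j * x j) ^ 2 =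
      p i * x i ^ 2 - 2 * (∑ j ∈ s, p j * x j) * (p i * x i) + (∑ j ∈ s, p j * x j) ^ 2 * p i :=
    fun i => by ring
  simp only [hexpand, sum_add_distrib, sum_sub_distrib, ← mul_sum, hp]
  ring

section SampleVariances

variable {Ωx : Type} (X : ℕ → Ωx → ℝ) {n m : ℕ} (ωx : Ωx)

lemma randVar_eq {k : Fin n → ℕ} (hk : ∑ i, k i = m) (hm : m ≠ 0) :
    randVar X n m k ωx =
      ∑ i, (k i : ℝ) / m * X i ωx ^ 2 - (∑ i, (k i : ℝ) / m * X i ωx) ^ 2 := by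
  have hp : ∑ i, (k i : ℝ) / m = 1 := by
    rw [← sum_div, ← Nat.cast_sum, hk, div_self (Nat.cast_ne_zero.2 hm)]
  rw [← sum_mul_sub_sum_mul_sq _ _ _ hp, randVar, randMean, sum_div, sum_div]
  simp only [div_mul_eq_mul_div]

lemma sampleVar_eq (hn : n ≠ 0) :
    sampleVar X n ωx = (∑ i : Fin n, X i ωx ^ 2) / n - sampleMean X n ωx ^ 2 := by
  have hp : ∑ _i : Fin n, 1 / (n : ℝ) = 1 := by simp [hn]
  have h := sum_mul_sub_sum_mul_sq univ _ (fun i : Fin n => X i ωx) hp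
  simp only [one_div_mul_eq_div, ← sum_div] at h
  rw [sampleVar, sampleMean, h]

lemma randVar_sub_sampleVar {k : Fin n → ℕ} (hk : ∑ i, k i = m) (hm : m ≠ 0) (hn : n ≠ 0) :
    randVar X n m k ωx - sampleVar X n ωx =
      ∑ i : Fin n, X i ωx ^ 2 * ((k i : ℝ) / m - 1 / n)
        - (∑ i : Fin n, X i ωx * ((k i : ℝ) / m - 1 / n)) ^ 2
        - ∑ i : Fin n, 2 * sampleMean X n ωx * X i ωx * ((k i : ℝ) / m - 1 / n) := by
  have hlin : ∀ c : Fin n → ℝ,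
      ∑ i, c i * ((k i : ℝ) / m - 1 / n) = ∑ i, (k i : ℝ) / m * c i - (∑ i, c i) / n := by
    intro c
    rw [sum_div, ← sum_sub_distrib]
    exact sum_congr rfl fun i _ => by ring
  have hmean : (∑ i : Fin n, X i ωx) / n = sampleMean X n ωx := rfl
  rw [randVar_eq X ωx hk hm, sampleVar_eq X ωx hn, hlin, hlin, hlin]
  simp only [mul_left_comm _ (2 * sampleMean X n ωx), ← mul_sum, mul_div_assoc, hmean]
  ring

lemma abs_randVar_sub_sampleVar_le {k : Fin n → ℕ} (hk : ∑ i, k i = m) (hm : m ≠ 0)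
    (hn : n ≠ 0) :
    |randVar X n m k ωx - sampleVar X n ωx| ≤
      |∑ i : Fin n, X i ωx ^ 2 * ((k i : ℝ) / m - 1 / n)|
        + |∑ i : Fin n, X i ωx * ((k i : ℝ) / m - 1 / n)| ^ 2
        + |∑ i : Fin n, 2 * sampleMean X n ωx * X i ωx * ((k i : ℝ) / m - 1 / n)| := by
  rw [randVar_sub_sampleVar X ωx hk hm hn, ← abs_pow]
  exact (abs_sub _ _).trans (by gcongr; exact abs_sub _ _)

end SampleVariances

lemma measure_lt_abs_randVar_sub_sampleVar_le {Ωx Ωw : Type} [MeasurableSpace Ωw]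
    {Pw : Measure Ωw} [IsFiniteMeasure Pw] {n m : ℕ} {w : Fin n → Ωw → ℕ}
    (hw : IsUnifMultinomial Pw n m w) (hn : n ≠ 0) (hm : m ≠ 0) (X : ℕ → Ωx → ℝ) (ωx : Ωx)
    {ε : ℝ} (hε : 0 < ε) :
    Pw {ω | ε < |randVar X n m (fun i => w i ω) ωx - sampleVar X n ωx|} ≤
      ENNReal.ofReal (9 * (n / m * sampleMean (fun i ω => X i ω ^ 2) n ωx ^ 2
          + 4 * sampleMean X n ωx ^ 2 * sampleMean (fun i ω => X i ω ^ 2) n ωx / m) / ε ^ 2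
        + 3 * sampleMean (fun i ω => X i ω ^ 2) n ωx / m / ε) := by
  set q := sampleMean (fun i ω => X i ω ^ 2) n ωx
  set xm := sampleMean X n ωx
  set η := ε / 3 with hη
  have hη0 : 0 < η := by positivity
  let A : Set Ωw := {ω | η < |∑ i : Fin n, X i ωx ^ 2 * ((w i ω : ℝ) / m - 1 / n)|}
  let B : Set Ωw := {ω | √η < |∑ i : Fin n, X i ωx * ((w i ω : ℝ) / m - 1 / n)|}
  let C : Set Ωw := {ω | η < |∑ i : Fin n, 2 * xm * X i ωx * ((w i ω : ℝ) / m - 1 / n)|}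
  have hsub : ({ω | ε < |randVar X n m (fun i => w i ω) ωx - sampleVar X n ωx|} : Set Ωw)
      ≤ᵐ[Pw] (A ∪ B ∪ C : Set Ωw) := by
    filter_upwards [hw.ae_sum_eq] with ω hω hD
    have hle := abs_randVar_sub_sampleVar_le X ωx hω hm hn
    by_contra h
    change ¬((η < |_| ∨ √η < |_|) ∨ η < |_|) at h
    simp only [not_or, not_lt] at h
    obtain ⟨⟨h2, h1⟩, h3⟩ := h
    have h1' := pow_le_pow_left₀ (abs_nonneg _) h1 2
    rw [Real.sq_sqrt hη0.le] at h1'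
    exact (lt_irrefl ε) (hD.trans_le (by linarith))
  have hq : ∑ i : Fin n, X i ωx ^ 2 = n * q := by
    simp only [q, sampleMean]; field_simp
  calc Pw {ω | ε < |randVar X n m (fun i => w i ω) ωx - sampleVar X n ωx|}
      ≤ Pw A + Pw B + Pw C :=
        (measure_mono_ae hsub).trans <|
          (measure_union_le _ _).trans (by gcongr; exact measure_union_le _ _)
    _ ≤ ENNReal.ofReal ((∑ i : Fin n, (X i ωx ^ 2) ^ 2) / (m * n * η ^ 2))
        + ENNReal.ofReal ((∑ i : Fin n, X i ωx ^ 2) / (m * n * √η ^ 2))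
        + ENNReal.ofReal ((∑ i : Fin n, (2 * xm * X i ωx) ^ 2) / (m * n * η ^ 2)) := by
        gcongr
        · exact hw.measure_lt_abs_linear_le hn hm hη0 _
        · exact hw.measure_lt_abs_linear_le hn hm (by positivity) _
        · exact hw.measure_lt_abs_linear_le hn hm hη0 _
    _ ≤ _ := by
        rw [← ENNReal.ofReal_add (by positivity) (by positivity),
          ← ENNReal.ofReal_add (by positivity) (by positivity)]
        refine ENNReal.ofReal_le_ofReal ?_
        have h4 : ∑ i : Fin n, (X i ωx ^ 2) ^ 2 ≤ (n * q) ^ 2 :=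
          hq ▸ sum_sq_le_sq_sum_of_nonneg fun i _ => sq_nonneg _
        simp only [mul_pow, ← mul_sum, hq, Real.sq_sqrt hη0.le]
        calc _ ≤ (n * q) ^ 2 / (m * n * η ^ 2) + n * q / (m * n * η)
              + 2 ^ 2 * xm ^ 2 * (n * q) / (m * n * η ^ 2) := by gcongr
          _ = _ := by rw [hη]; field_simp; ring

lemma tendsto_measure_lt_abs_randVar_sub_sampleVar {Ωx Ωw : Type} [MeasurableSpace Ωw]
    {Pw : Measure Ωw} [IsFiniteMeasure Pw] {m : ℕ → ℕ} {w : (n : ℕ) → Fin n → Ωw → ℕ}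
    (hw : ∀ n, IsUnifMultinomial Pw n (m n) (w n)) (hm : Tendsto m atTop atTop)
    (hnm : Tendsto (fun n : ℕ => (n : ℝ) / m n) atTop (𝓝 0))
    {X : ℕ → Ωx → ℝ} {ωx : Ωx} {a L : ℝ}
    (hX : Tendsto (fun n => sampleMean X n ωx) atTop (𝓝 a))
    (hX2 : Tendsto (fun n => sampleMean (fun i ω => X i ω ^ 2) n ωx) atTop (𝓝 L))
    {ε : ℝ} (hε : 0 < ε) :
    Tendsto (fun n => Pw {ω | ε < |randVar X n (m n) (fun i => w n i ω) ωx - sampleVar X n ωx|})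
      atTop (𝓝 0) := by
  have hm' : Tendsto (fun n => (m n : ℝ)) atTop atTop := tendsto_natCast_atTop_atTop.comp hm
  have hbound := (((hnm.mul (hX2.pow 2)).add ((((hX.pow 2).const_mul 4).mul hX2).div_atTop hm'))
    |>.const_mul 9 |>.div_const (ε ^ 2)).add (((hX2.const_mul 3).div_atTop hm').div_const ε)
  simp only [zero_mul, mul_zero, zero_div, add_zero] at hbound
  refine tendsto_of_tendsto_of_tendsto_of_le_of_le' tendsto_const_nhds
    (by simpa using ENNReal.tendsto_ofReal hbound) (Eventually.of_forall fun _ => zero_le) ?_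
  filter_upwards [eventually_ne_atTop 0, hm.eventually_ne_atTop 0] with n hn hmn
  exact measure_lt_abs_randVar_sub_sampleVar_le (hw n) hn hmn X ωx hε

lemma ae_tendsto_sampleMean {Ω : Type} [MeasurableSpace Ω] {P : Measure Ω}
    [IsProbabilityMeasure P] (X : ℕ → Ω → ℝ) (hint : Integrable (X 0) P)
    (hindep : Pairwise (Function.onFun (IndepFun · · P) X))
    (hident : ∀ i, IdentDistrib (X i) (X 0) P P) :
    ∀ᵐ ω ∂P, Tendsto (fun n => sampleMean X n ω) atTop (𝓝 (P[X 0])) := by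
  filter_upwards [strong_law_ae_real X hint hindep hident] with ω h
  simpa only [sampleMean, Fin.sum_univ_eq_sum_range (fun i => X i ω)] using h

lemma tendsto_prod_apply_of_ae_tendsto_zero {α β : Type*} [MeasurableSpace α]
    [MeasurableSpace β] {μ : Measure α} {ν : Measure β} [IsFiniteMeasure μ] [IsFiniteMeasure ν]
    {E : ℕ → Set (α × β)} (hE : ∀ n, MeasurableSet (E n))
    (h : ∀ᵐ x ∂μ, Tendsto (fun n => ν (Prod.mk x ⁻¹' E n)) atTop (𝓝 0)) :
    Tendsto (fun n => μ.prod ν (E n)) atTop (𝓝 0) := by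
  simp_rw [Measure.prod_apply (hE _)]
  simpa using tendsto_lintegral_of_dominated_convergence (fun _ => ν Set.univ)
    (fun n => measurable_measure_prodMk_left (hE n))
    (fun n => ae_of_all _ fun x => measure_mono (Set.subset_univ _))
    (by simpa using ENNReal.mul_ne_top (measure_ne_top ν _) (measure_ne_top μ _)) h

lemma measurable_randVar_sub_sampleVar {Ωx Ωw : Type} [MeasurableSpace Ωx] [MeasurableSpace Ωw]
    {X : ℕ → Ωx → ℝ} (hX : ∀ i, Measurable (X i)) {n m : ℕ} {w : Fin n → Ωw → ℕ}
    (hw : ∀ i, Measurable (w i)) :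
    Measurable fun p : Ωx × Ωw => randVar X n m (fun i => w i p.2) p.1 - sampleVar X n p.1 := by
  unfold randVar randMean sampleVar sampleMean
  fun_prop

theorem randVar_consistency_general
    {Ωx Ωw : Type} [MeasurableSpace Ωx] [MeasurableSpace Ωw]
    (Px : Measure Ωx) (Pw : Measure Ωw)
    [IsProbabilityMeasure Px] [IsProbabilityMeasure Pw]
    (X : ℕ → Ωx → ℝ)
    (hXmeas : ∀ i, Measurable (X i))
    (hXindep : iIndepFun X Px)
    (hXid : ∀ i, IdentDistrib (X i) (X 0) Px Px)
    (μ : ℝ)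
    (hXint : Integrable (X 0) Px)
    (hVarInt : Integrable (fun ω => (X 0 ω - μ) ^ 2) Px)
    (m : ℕ → ℕ) (w : (n : ℕ) → Fin n → Ωw → ℕ)
    (hw : ∀ n, IsUnifMultinomial Pw n (m n) (w n))
    (hm : Tendsto m atTop atTop)
    (hnm : Tendsto (fun (n : ℕ) => (n : ℝ) / (m n : ℝ)) atTop (nhds 0))
    :
    ∀ ε : ℝ, 0 < ε →
      Tendsto (fun n => ((Px.prod Pw) {p |
          |randVar X n (m n) (fun i => w n i p.2) p.1 - sampleVar X n p.1| > ε}).toReal)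
        atTop (nhds 0) := by
  intro ε hε
  have hXsq : Integrable (fun ω => X 0 ω ^ 2) Px := by
    convert (hVarInt.add (hXint.const_mul (2 * μ))).sub (integrable_const (μ ^ 2)) using 1
    ext ω
    simp only [Pi.add_apply, Pi.sub_apply]
    ring
  have hpair : Pairwise (Function.onFun (IndepFun · · Px) X) := fun i j hij => hXindep.indepFun hij
  have hX := ae_tendsto_sampleMean X hXint hpair hXid
  have hX2 := ae_tendsto_sampleMean (fun i ω => X i ω ^ 2) hXsq
    (fun i j hij => (hpair hij).comp (measurable_id.pow_const 2) (measurable_id.pow_const 2))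
    (fun i => (hXid i).comp (measurable_id.pow_const 2))
  have hE : ∀ n, MeasurableSet {p : Ωx × Ωw |
      |randVar X n (m n) (fun i => w n i p.2) p.1 - sampleVar X n p.1| > ε} := fun n =>
    measurableSet_lt measurable_const (measurable_randVar_sub_sampleVar hXmeas (hw n).1).abs
  refine (ENNReal.tendsto_toReal ENNReal.zero_ne_top).comp
    (tendsto_prod_apply_of_ae_tendsto_zero hE ?_)
  filter_upwards [hX, hX2] with ωx hωx hωx2
  exact tendsto_measure_lt_abs_randVar_sub_sampleVar hw hm hnm hωx hωx2 hε

theorem randVar_consistency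
    {Ωx Ωw : Type} [MeasurableSpace Ωx] [MeasurableSpace Ωw]
    (Px : Measure Ωx) (Pw : Measure Ωw)
    [IsProbabilityMeasure Px] [IsProbabilityMeasure Pw]
    (X : ℕ → Ωx → ℝ)
    (hXmeas : ∀ i, Measurable (X i))
    (hXindep : iIndepFun X Px)
    (hXid : ∀ i, IdentDistrib (X i) (X 0) Px Px)
    (μ σ2 : ℝ)
    (hXint : Integrable (X 0) Px)
    (hμ : μ = ∫ ω, X 0 ω ∂Px)
    (hVarInt : Integrable (fun ω => (X 0 ω - μ) ^ 2) Px)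
    (hσ2 : σ2 = ∫ ω, (X 0 ω - μ) ^ 2 ∂Px)
    (hσ2pos : 0 < σ2)
    (m : ℕ → ℕ) (w : (n : ℕ) → Fin n → Ωw → ℕ)
    (hw : ∀ n, IsUnifMultinomial Pw n (m n) (w n))
    (hm : Tendsto m atTop atTop)
    (hnm : Tendsto (fun (n : ℕ) => (n : ℝ) / (m n : ℝ)) atTop (nhds 0))
    :
    ∀ ε : ℝ, 0 < ε →
      Tendsto (fun n => ((Px.prod Pw) {p |
          |randVar X n (m n) (fun i => w n i p.2) p.1 - sampleVar X n p.1| > ε}).toReal)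
        atTop (nhds 0) :=
  randVar_consistency_general Px Pw X hXmeas hXindep hXid μ hXint hVarInt m w hw hm hnm
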